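/- arXiv:2501.04461 — 4 statements merged into one kernel-verified Lean document; each statement's English description precedes it below -/
import Mathlib

section
/- Let n ≥ 1, let {a_G}_{G ∈ M_n} be complex numbers, and let Q be a monic polynomial in F_q[t]. Then the sum over all Dirichlet characters χ modulo Q of |Σ_{G ∈ M_n} a_G χ(G)|² is at most 2·φ(Q)·(q^{n - deg Q} + 1)·Σ_{G ∈ M_n, gcd(G,Q)=1} |a_G|². -/
open Polynomial Finset Filter
open scoped Classical

/-- The set of monic polynomials of degree `n` over `Fq`. -/
noncomputable def Mn (Fq : Type) [Field Fq] [Fintype Fq] (n : ℕ) : Finset (Polynomial Fq) :=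
  (Finset.univ : Finset (Fin n → Fq)).image
    (fun c => Polynomial.X ^ n + ∑ i : Fin n, Polynomial.C (c i) * Polynomial.X ^ (i : ℕ))

/-- The set of monic irreducible polynomials of degree `x` over `Fq`. -/
noncomputable def Px (Fq : Type) [Field Fq] [Fintype Fq] (x : ℕ) : Finset (Polynomial Fq) :=
  (Mn Fq x).filter Irreducible

/-- `Mn` extended to integer degrees: empty for negative degree. -/
noncomputable def MnInt (Fq : Type) [Field Fq] [Fintype Fq] (m : ℤ) : Finset (Polynomial Fq) :=
  if 0 ≤ m then Mn Fq m.toNat else ∅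

/-- The Liouville function on `Fq[t]`: `(-1)` to the number of irreducible
factors counted with multiplicity. -/
noncomputable def liouville {Fq : Type} [Field Fq] [Fintype Fq] (G : Polynomial Fq) : ℤ :=
  (-1) ^ Multiset.card (UniqueFactorizationMonoid.factors G)

/-- The residue ring `Fq[t]/(Q)`. -/
abbrev RQ (Fq : Type) [Field Fq] [Fintype Fq] (Q : Polynomial Fq) :=
  Polynomial Fq ⧸ Ideal.span {Q}

/-- Value of a Dirichlet character mod `Q` at a polynomial. -/
noncomputable def chpoly {Fq : Type} [Field Fq] [Fintype Fq] {Q : Polynomial Fq}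
    (χ : MulChar (RQ Fq Q) ℂ) (G : Polynomial Fq) : ℂ :=
  χ (Ideal.Quotient.mk (Ideal.span {Q}) G)

/-- A Dirichlet character is even if it is invariant under multiplication by
nonzero constants. -/
noncomputable def IsEvenChar {Fq : Type} [Field Fq] [Fintype Fq] {Q : Polynomial Fq}
    (χ : MulChar (RQ Fq Q) ℂ) : Prop :=
  ∀ (c : Fqˣ) (G : Polynomial Fq), chpoly χ (Polynomial.C (c : Fq) * G) = chpoly χ G

/-- Euler's function for polynomial moduli: `φ(Q) = |(Fq[t]/Q)ˣ|`. -/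
noncomputable def phi (Fq : Type) [Field Fq] [Fintype Fq] (Q : Polynomial Fq) : ℕ :=
  Nat.card (Polynomial Fq ⧸ Ideal.span {Q})ˣ

/-- A polynomial is `h`-smooth if all of its irreducible factors have degree at most `h`. -/
def IsSmooth {Fq : Type} [Field Fq] [Fintype Fq] (h : ℕ) (G : Polynomial Fq) : Prop :=
  ∀ P : Polynomial Fq, Irreducible P → P ∣ G → P.natDegree ≤ h

/-- The von Mangoldt function on `Fq[t]`: `Λ(P^k) = deg P` for `P` monic
irreducible and `k ≥ 1`, and `Λ = 0` otherwise. -/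
noncomputable def Lam {Fq : Type} [Field Fq] [Fintype Fq] (G : Polynomial Fq) : ℕ :=
  if hG : ∃ P : Polynomial Fq, P.Monic ∧ Irreducible P ∧ ∃ k, 1 ≤ k ∧ G = P ^ k
  then hG.choose.natDegree else 0

/-- `ω_{[h,n]}(M)`: number of distinct monic irreducible divisors of `M` of degree in `[h,n]`. -/
noncomputable def omegaIcc {Fq : Type} [Field Fq] [Fintype Fq] (h n : ℕ) (M : Polynomial Fq) : ℕ :=
  (((Finset.Icc h n).biUnion (Px Fq)).filter (· ∣ M)).card

/-- `ω_{(h,n]}(M)`: number of distinct monic irreducible divisors of `M` of degree in `(h,n]`. -/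
noncomputable def omegaIoc {Fq : Type} [Field Fq] [Fintype Fq] (h n : ℕ) (M : Polynomial Fq) : ℕ :=
  (((Finset.Ioc h n).biUnion (Px Fq)).filter (· ∣ M)).card

/-- The polynomials of degree at most `h`. -/
noncomputable def Dle (Fq : Type) [Field Fq] [Fintype Fq] (h : ℕ) : Finset (Polynomial Fq) :=
  (Finset.univ : Finset (Fin (h + 1) → Fq)).image
    (fun c => ∑ i : Fin (h + 1), Polynomial.C (c i) * Polynomial.X ^ (i : ℕ))

/-- The short interval of length `h` about `G₀`: all `G` with `deg (G - G₀) ≤ h`. -/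
noncomputable def Ih {Fq : Type} [Field Fq] [Fintype Fq] (h : ℕ) (G₀ : Polynomial Fq) :
    Finset (Polynomial Fq) :=
  (Dle Fq h).image (fun E => G₀ + E)

/-!
Expanding the square and using the orthogonality of the characters of `(Fq[t]/Q)ˣ`, the left side
equals `φ(Q) ∑ᵤ |∑_{G ≡ u} a_G|²`, summed over the unit residues `u`. Two monic `G` of degree `n`
in one residue class differ by `Q K` with `deg K < n - deg Q`, so a class holds at most
`q ^ (n - deg Q)` of them (at most one if `n < deg Q`), and Cauchy–Schwarz on each class finishes.
-/

namespace MulChar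

variable {R : Type*} [CommRing R] [Fintype R] [DecidableEq R]

lemma sum_mul_apply_eq_sum_units {S : Type*} [CommSemiring S] (χ : MulChar R S) (f : R → S) :
    ∑ x, f x * χ x = ∑ u : Rˣ, f u * χ u := by
  symm
  calc ∑ u : Rˣ, f u * χ u = ∑ x ∈ univ.map ⟨Units.val, Units.val_injective⟩, f x * χ x :=
        (sum_map univ ⟨Units.val, Units.val_injective⟩ fun x ↦ f x * χ x).symm
    _ = ∑ x, f x * χ x := sum_subset (subset_univ _) fun x _ hx ↦ ?_
  have hx : ¬IsUnit x := fun ⟨u, hu⟩ ↦ hx (mem_map.2 ⟨u, mem_univ _, hu⟩)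
  rw [map_nonunit χ hx, mul_zero]

lemma sum_apply_eq_ite (S : Type*) [CommRing S] [IsDomain S]
    [HasEnoughRootsOfUnity S (Monoid.exponent Rˣ)] [Fintype (MulChar R S)] (a : R) :
    ∑ χ : MulChar R S, χ a = if a = 1 then (Nat.card Rˣ : S) else 0 := by
  split_ifs with ha
  · simp only [ha, map_one, sum_const, card_univ, nsmul_eq_mul, mul_one,
      ← Nat.card_eq_fintype_card, card_eq_card_units_of_hasEnoughRootsOfUnity]
  · obtain ⟨χ, hχ⟩ := exists_apply_ne_one_of_hasEnoughRootsOfUnity R S ha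
    refine eq_zero_of_mul_eq_self_left hχ ?_
    simp only [mul_sum, ← mul_apply]
    exact Fintype.sum_bijective _ (Group.mulLeft_bijective χ) _ _ fun _ ↦ rfl

lemma sum_norm_sq_sum_mul_apply [Fintype (MulChar R ℂ)] (f : R → ℂ) :
    ∑ χ : MulChar R ℂ, ‖∑ x, f x * χ x‖ ^ 2 = Nat.card Rˣ * ∑ u : Rˣ, ‖f u‖ ^ 2 := by
  have : NeZero (Monoid.exponent Rˣ) := ⟨Monoid.exponent_ne_zero_of_finite⟩
  have hconj (χ : MulChar R ℂ) (v : Rˣ) : (starRingEnd ℂ) (χ v) = χ ↑v⁻¹ := by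
    rw [← RCLike.star_def, star_apply', inv_apply, Ring.inverse_unit]
  have horth (u v : Rˣ) :
      ∑ χ : MulChar R ℂ, χ u * χ ↑v⁻¹ = if u = v then (Nat.card Rˣ : ℂ) else 0 := by
    simp_rw [← map_mul, ← Units.val_mul, sum_apply_eq_ite, Units.val_eq_one, mul_inv_eq_one]
  apply Complex.ofReal_injective
  push_cast
  simp only [← Complex.mul_conj', sum_mul_apply_eq_sum_units, map_sum, map_mul, hconj,
    sum_mul_sum, sum_comm (γ := MulChar R ℂ)]
  calc _ = ∑ u : Rˣ, ∑ v : Rˣ, f u * (starRingEnd ℂ) (f v) * ∑ χ : MulChar R ℂ, χ u * χ ↑v⁻¹ := by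
        simp only [mul_sum]
        exact sum_congr rfl fun u _ ↦ sum_congr rfl fun v _ ↦ sum_congr rfl fun χ _ ↦ by ring
    _ = _ := by
        simp only [horth, mul_ite, mul_zero, Fintype.sum_ite_eq]
        rw [← sum_mul, mul_comm]

end MulChar

lemma norm_sum_sq_le_card_mul {ι E : Type*} [SeminormedAddCommGroup E] (s : Finset ι)
    (f : ι → E) : ‖∑ i ∈ s, f i‖ ^ 2 ≤ #s * ∑ i ∈ s, ‖f i‖ ^ 2 :=
  (pow_le_pow_left₀ (norm_nonneg _) (norm_sum_le _ _) 2).trans sq_sum_le_card_mul_sum_sq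

lemma Finset.sum_mul_comp_eq_sum_fiberwise {ι κ β : Type*} [Fintype κ] [DecidableEq κ]
    [NonUnitalNonAssocSemiring β] (s : Finset ι) (g : ι → κ) (a : ι → β) (h : κ → β) :
    ∑ i ∈ s, a i * h (g i) = ∑ x, (∑ i ∈ s with g i = x, a i) * h x := by
  rw [← sum_fiberwise s g]
  refine sum_congr rfl fun x _ ↦ ?_
  rw [sum_mul]
  exact sum_congr rfl fun i hi ↦ by rw [(mem_filter.1 hi).2]

lemma Finset.sum_units_sum_fiberwise {ι M β : Type*} [Monoid M] [Fintype Mˣ] [DecidableEq M]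
    [AddCommMonoid β] (s : Finset ι) (g : ι → M) (f : ι → β) :
    ∑ u : Mˣ, ∑ i ∈ s with g i = u, f i = ∑ i ∈ s with IsUnit (g i), f i := by
  calc ∑ u : Mˣ, ∑ i ∈ s with g i = u, f i
      = ∑ x ∈ univ.map ⟨Units.val, Units.val_injective⟩, ∑ i ∈ s with g i = x, f i :=
        (sum_map univ ⟨Units.val, Units.val_injective⟩ fun x ↦ ∑ i ∈ s with g i = x, f i).symm
    _ = _ := by
        rw [sum_fiberwise_eq_sum_filter]
        congr! 2 with i
        simp [IsUnit]

lemma pow_sub_le_zpow_sub_add_one {α : Type*} [Semifield α] [LinearOrder α]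
    [IsStrictOrderedRing α] {x : α} (hx : 0 ≤ x) (n d : ℕ) :
    x ^ (n - d) ≤ x ^ ((n : ℤ) - d) + 1 := by
  rcases le_total d n with h | h
  · rw [← zpow_natCast, Nat.cast_sub h]
    exact le_add_of_nonneg_right zero_le_one
  · rw [Nat.sub_eq_zero_of_le h, pow_zero]
    exact le_add_of_nonneg_left (zpow_nonneg hx _)

lemma Ideal.Quotient.isUnit_mk_span_singleton_iff {R : Type*} [CommRing R] (Q x : R) :
    IsUnit (Ideal.Quotient.mk (Ideal.span {Q}) x) ↔ IsCoprime x Q := by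
  rw [isUnit_iff_exists_inv', IsCoprime]
  constructor
  · rintro ⟨y, hy⟩
    obtain ⟨v, rfl⟩ := Ideal.Quotient.mk_surjective y
    rw [← map_mul, ← map_one (Ideal.Quotient.mk _), Ideal.Quotient.eq,
      Ideal.mem_span_singleton] at hy
    obtain ⟨w, hw⟩ := hy
    exact ⟨v, -w, by linear_combination hw⟩
  · rintro ⟨v, w, h⟩
    refine ⟨Ideal.Quotient.mk _ v, ?_⟩
    rw [← map_mul, ← map_one (Ideal.Quotient.mk _), Ideal.Quotient.eq, Ideal.mem_span_singleton]
    exact ⟨-w, by linear_combination h⟩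

namespace Polynomial

variable {R : Type*} [CommRing R]

lemma finite_quotient_span_singleton_of_monic [Finite R] {Q : R[X]} (hQ : Q.Monic) :
    Finite (R[X] ⧸ Ideal.span {Q}) :=
  have : Module.Finite R (AdjoinRoot Q) := (AdjoinRoot.powerBasis' hQ).finite
  Module.finite_of_finite R (M := AdjoinRoot Q)

lemma IsMonicOfDegree.degree_sub_lt [Nontrivial R] {p q : R[X]} {n : ℕ}
    (hp : IsMonicOfDegree p n) (hq : IsMonicOfDegree q n) : (p - q).degree < n := by
  have hdeg : p.degree = n := by rw [degree_eq_natDegree hp.ne_zero, hp.natDegree_eq]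
  have hdeg' : q.degree = n := by rw [degree_eq_natDegree hq.ne_zero, hq.natDegree_eq]
  simpa only [hdeg] using degree_sub_lt_left (hdeg.trans hdeg'.symm) hp.ne_zero
    (hp.leadingCoeff_eq.trans hq.leadingCoeff_eq.symm)

lemma divByMonic_mem_degreeLT [Nontrivial R] {P Q : R[X]} {n : ℕ} (hQ : Q.Monic)
    (hP : P ∈ degreeLT R n) : P /ₘ Q ∈ degreeLT R (n - Q.natDegree) := by
  by_cases h : P /ₘ Q = 0
  · rw [h]; exact zero_mem _
  have hQP : Q.natDegree ≤ P.natDegree :=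
    natDegree_le_natDegree (not_lt.1 ((divByMonic_eq_zero_iff hQ).not.1 h))
  have hP0 : P ≠ 0 := fun h0 ↦ h (by rw [h0, zero_divByMonic])
  rw [mem_degreeLT, degree_eq_natDegree h, natDegree_divByMonic P hQ] at *
  rw [degree_eq_natDegree hP0, Nat.cast_lt] at hP
  exact_mod_cast (by omega : P.natDegree - Q.natDegree < n - Q.natDegree)

lemma card_le_of_forall_dvd_sub [Fintype R] [Nontrivial R] {Q G₀ : R[X]} (hQ : Q.Monic) {n : ℕ}
    {s : Finset R[X]} (hs : ∀ G ∈ s, Q ∣ G - G₀ ∧ G - G₀ ∈ degreeLT R n) :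
    #s ≤ Fintype.card R ^ (n - Q.natDegree) := by
  have hmul (G : s) : Q * ((G - G₀ : R[X]) /ₘ Q) = G - G₀ := by
    simpa [(modByMonic_eq_zero_iff_dvd hQ).2 (hs G G.2).1] using
      modByMonic_add_div (G - G₀ : R[X]) Q
  let quot (G : s) : degreeLT R (n - Q.natDegree) :=
    ⟨(G - G₀ : R[X]) /ₘ Q, divByMonic_mem_degreeLT hQ (hs G G.2).2⟩
  have hquot : Function.Injective quot := fun G H hGH ↦ by
    have := congrArg (Q * ·) (congrArg Subtype.val hGH)
    exact Subtype.ext (by simpa [quot, hmul] using this)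
  have : Finite (degreeLT R (n - Q.natDegree)) :=
    .of_equiv _ (degreeLTEquiv R _).toEquiv.symm
  calc #s = Nat.card s := (Nat.card_eq_finsetCard s).symm
    _ ≤ Nat.card (degreeLT R (n - Q.natDegree)) := Nat.card_le_card_of_injective quot hquot
    _ = Fintype.card R ^ (n - Q.natDegree) := by
        rw [Nat.card_congr (degreeLTEquiv R _).toEquiv, Nat.card_fun, Nat.card_fin,
          Nat.card_eq_fintype_card]

end Polynomial

section FunctionField

variable {Fq : Type} [Field Fq] [Fintype Fq]

lemma isMonicOfDegree_of_mem_Mn {n : ℕ} {G : Fq[X]} (hG : G ∈ Mn Fq n) : IsMonicOfDegree G n := by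
  obtain ⟨c, -, rfl⟩ := mem_image.1 hG
  have hlt := degree_sum_fin_lt c
  refine ⟨?_, monic_X_pow_add hlt⟩
  rw [natDegree_add_eq_left_of_degree_lt (by rwa [degree_X_pow]), natDegree_X_pow]

lemma card_Mn_filter_mk_eq_le {Q : Fq[X]} (hQ : Q.Monic) (n : ℕ) (r : RQ Fq Q) :
    #{G ∈ Mn Fq n | Ideal.Quotient.mk (Ideal.span {Q}) G = r} ≤
      Fintype.card Fq ^ (n - Q.natDegree) := by
  obtain h | ⟨G₀, hG₀⟩ := Finset.eq_empty_or_nonempty {G ∈ Mn Fq n | Ideal.Quotient.mk _ G = r}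
  · simp [h]
  refine card_le_of_forall_dvd_sub hQ (G₀ := G₀) fun G hG ↦ ?_
  rw [mem_filter] at hG hG₀
  refine ⟨?_, mem_degreeLT.2 <|
    (isMonicOfDegree_of_mem_Mn hG.1).degree_sub_lt (isMonicOfDegree_of_mem_Mn hG₀.1)⟩
  rw [← Ideal.mem_span_singleton, ← Ideal.Quotient.eq, hG.2, hG₀.2]

end FunctionField

theorem l2_mean_value_theorem_general (Fq : Type) [Field Fq] [Fintype Fq]
    (n : ℕ) (Q : Polynomial Fq) (hQ : Q.Monic)
    (a : Polynomial Fq → ℂ) :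
    ∑ᶠ χ : MulChar (RQ Fq Q) ℂ, ‖∑ G ∈ Mn Fq n, a G * chpoly χ G‖ ^ 2 ≤
      2 * (phi Fq Q : ℝ) * ((Fintype.card Fq : ℝ) ^ ((n : ℤ) - (Q.natDegree : ℤ)) + 1) *
        ∑ G ∈ (Mn Fq n).filter (fun G => IsCoprime G Q), ‖a G‖ ^ 2 := by
  have := finite_quotient_span_singleton_of_monic hQ
  let _ : Fintype (RQ Fq Q) := .ofFinite _
  let _ : Fintype (MulChar (RQ Fq Q) ℂ) := .ofFinite _
  set π := Ideal.Quotient.mk (Ideal.span {Q})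
  set b : RQ Fq Q → ℂ := fun r ↦ ∑ G ∈ Mn Fq n with π G = r, a G
  set A : ℝ := ∑ G ∈ Mn Fq n with IsCoprime G Q, ‖a G‖ ^ 2
  have hsum (χ : MulChar (RQ Fq Q) ℂ) : ∑ G ∈ Mn Fq n, a G * chpoly χ G = ∑ r, b r * χ r :=
    sum_mul_comp_eq_sum_fiberwise (Mn Fq n) π a χ
  have hfiber (r : RQ Fq Q) :
      ‖b r‖ ^ 2 ≤ Fintype.card Fq ^ (n - Q.natDegree) * ∑ G ∈ Mn Fq n with π G = r, ‖a G‖ ^ 2 :=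
    (norm_sum_sq_le_card_mul _ _).trans <| by gcongr; exact_mod_cast card_Mn_filter_mk_eq_le hQ n r
  calc ∑ᶠ χ : MulChar (RQ Fq Q) ℂ, ‖∑ G ∈ Mn Fq n, a G * chpoly χ G‖ ^ 2
      = phi Fq Q * ∑ u : (RQ Fq Q)ˣ, ‖b u‖ ^ 2 := by
        simp only [finsum_eq_sum_of_fintype, hsum, MulChar.sum_norm_sq_sum_mul_apply]; rfl
    _ ≤ phi Fq Q * ∑ u : (RQ Fq Q)ˣ,
          Fintype.card Fq ^ (n - Q.natDegree) * ∑ G ∈ Mn Fq n with π G = u, ‖a G‖ ^ 2 := by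
        gcongr with u; exact hfiber u
    _ = phi Fq Q * Fintype.card Fq ^ (n - Q.natDegree) * A := by
        rw [← mul_sum, sum_units_sum_fiberwise (Mn Fq n) π, ← mul_assoc]
        simp only [π, Ideal.Quotient.isUnit_mk_span_singleton_iff, A]
    _ ≤ 2 * phi Fq Q * ((Fintype.card Fq : ℝ) ^ ((n : ℤ) - (Q.natDegree : ℤ)) + 1) * A := by
        grw [pow_sub_le_zpow_sub_add_one (Nat.cast_nonneg (Fintype.card Fq)) n Q.natDegree]
        rw [mul_assoc 2, mul_assoc 2]
        exact le_mul_of_one_le_left (by positivity) one_le_two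

theorem l2_mean_value_theorem (Fq : Type) [Field Fq] [Fintype Fq]
    (n : ℕ) (hn : 1 ≤ n) (Q : Polynomial Fq) (hQ : Q.Monic)
    (a : Polynomial Fq → ℂ) :
    ∑ᶠ χ : MulChar (RQ Fq Q) ℂ, ‖∑ G ∈ Mn Fq n, a G * chpoly χ G‖ ^ 2 ≤
      2 * (phi Fq Q : ℝ) * ((Fintype.card Fq : ℝ) ^ ((n : ℤ) - (Q.natDegree : ℤ)) + 1) *
        ∑ G ∈ (Mn Fq n).filter (fun G => IsCoprime G Q), ‖a G‖ ^ 2 :=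
  l2_mean_value_theorem_general Fq n Q hQ a
end

section
/- Ramaré's identity for function fields: let 1 ≤ h < n, let f : M → U be a multiplicative function into the unit disc, and let G be a monic polynomial having at least one irreducible factor R with deg R ∈ [h, n]. Then f(G) = Σ f(R·M) / (1_{gcd(R,M)=1} + ω_{[h,n]}(M)), where the sum is over factorizations G = R·M with R monic irreducible of degree in [h,n], and ω_{[h,n]}(M) denotes the number of distinct monic irreducible divisors of M whose degree lies in [h,n]. -/
open Polynomial Finset Filter
open scoped Classical

/-!
Each factorization `G = R * M` with `R` in a set `S` of pairwise non-associated primes satisfies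
`{p ∈ S : p ∣ G} = insert R {p ∈ S : p ∣ M}`, so the denominator `1_{(R, M) = 1} + ω_S(M)` equals
`ω_S(G)`, the number of summands. Every summand is therefore `f G / ω_S(G)`.
-/

section PrimeDivisors

variable {α : Type*} [CommMonoidWithZero α] {S : Finset α}

theorem filter_dvd_mul_eq_insert (hS : ∀ p ∈ S, Prime p) (hSa : ∀ p ∈ S, ∀ q ∈ S, p ∣ q → p = q)
    {R : α} (hR : R ∈ S) (M : α) :
    S.filter (· ∣ R * M) = insert R (S.filter (· ∣ M)) := by
  ext p
  simp only [mem_filter, mem_insert]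
  constructor
  · rintro ⟨hp, hpRM⟩
    rcases (hS p hp).dvd_mul.1 hpRM with hpR | hpM
    · exact Or.inl (hSa p hp R hR hpR)
    · exact Or.inr ⟨hp, hpM⟩
  · rintro (rfl | ⟨hp, hpM⟩)
    · exact ⟨hR, dvd_mul_right p M⟩
    · exact ⟨hp, dvd_mul_of_dvd_right hpM R⟩

theorem card_filter_dvd_mul (hS : ∀ p ∈ S, Prime p) (hSa : ∀ p ∈ S, ∀ q ∈ S, p ∣ q → p = q)
    {R : α} (hR : R ∈ S) (M : α) :
    #(S.filter (· ∣ R * M)) = (if R ∣ M then 0 else 1) + #(S.filter (· ∣ M)) := by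
  rw [filter_dvd_mul_eq_insert hS hSa hR, card_insert_eq_ite]
  by_cases hRM : R ∣ M <;> simp [hR, hRM, add_comm]

end PrimeDivisors

theorem ramare_identity_of_primes {α K : Type*} [EuclideanDomain α] [Field K] [CharZero K]
    {S : Finset α} (hS : ∀ p ∈ S, Prime p) (hSa : ∀ p ∈ S, ∀ q ∈ S, p ∣ q → p = q)
    (f : α → K) {G : α} (hG : ∃ R ∈ S, R ∣ G) :
    f G = ∑ R ∈ S.filter (· ∣ G),
      f (R * (G / R)) / ((if IsCoprime R (G / R) then (1 : K) else 0) + #(S.filter (· ∣ G / R))) := by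
  obtain ⟨R₀, hR₀, hR₀G⟩ := hG
  have hcard : (#(S.filter (· ∣ G)) : K) ≠ 0 :=
    Nat.cast_ne_zero.2 (card_pos.2 ⟨R₀, mem_filter.2 ⟨hR₀, hR₀G⟩⟩).ne'
  have hterm : ∀ R ∈ S.filter (· ∣ G), f (R * (G / R)) /
      ((if IsCoprime R (G / R) then (1 : K) else 0) + #(S.filter (· ∣ G / R)))
        = f G / #(S.filter (· ∣ G)) := by
    intro R hR
    obtain ⟨hRS, hRG⟩ := mem_filter.1 hR
    have hRM : R * (G / R) = G := EuclideanDomain.mul_div_cancel' (hS R hRS).ne_zero hRG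
    have hdenom := card_filter_dvd_mul hS hSa hRS (G / R)
    rw [hRM] at hdenom
    rw [hRM, hdenom, (hS R hRS).coprime_iff_not_dvd]
    by_cases hdvd : R ∣ G / R <;> simp [hdvd]
  rw [sum_congr rfl hterm, sum_const, nsmul_eq_mul, mul_div_cancel₀ _ hcard]

theorem monic_of_mem_Mn {Fq : Type} [Field Fq] [Fintype Fq] {n : ℕ} {P : Polynomial Fq}
    (hP : P ∈ Mn Fq n) : P.Monic := by
  obtain ⟨c, -, rfl⟩ := mem_image.1 hP
  refine (monic_X_pow n).add_of_left ?_
  rw [degree_X_pow]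
  exact degree_sum_fin_lt c

theorem monic_irreducible_of_mem_biUnion_Px {Fq : Type} [Field Fq] [Fintype Fq] {s : Finset ℕ}
    {P : Polynomial Fq} (hP : P ∈ s.biUnion (Px Fq)) : P.Monic ∧ Irreducible P := by
  obtain ⟨d, -, hPd⟩ := mem_biUnion.1 hP
  obtain ⟨hMn, hirr⟩ := mem_filter.1 hPd
  exact ⟨monic_of_mem_Mn hMn, hirr⟩

theorem ramare_identity_general (Fq : Type) [Field Fq] [Fintype Fq]
    (h n : ℕ)
    (f : Polynomial Fq → ℂ)
    (G : Polynomial Fq)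
    (hfac : ∃ R ∈ (Finset.Icc h n).biUnion (Px Fq), R ∣ G) :
    f G = ∑ R ∈ ((Finset.Icc h n).biUnion (Px Fq)).filter (· ∣ G),
      f (R * (G / R)) /
        ((if IsCoprime R (G / R) then (1 : ℂ) else 0) + (omegaIcc h n (G / R) : ℂ)) := by
  refine ramare_identity_of_primes (fun p hp => ?_) (fun p hp q hq hpq => ?_) f hfac
  · exact (monic_irreducible_of_mem_biUnion_Px hp).2.prime
  · obtain ⟨hpm, hpi⟩ := monic_irreducible_of_mem_biUnion_Px hp
    obtain ⟨hqm, hqi⟩ := monic_irreducible_of_mem_biUnion_Px hq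
    exact eq_of_monic_of_associated hpm hqm (hpi.associated_of_dvd hqi hpq)

theorem ramare_identity (Fq : Type) [Field Fq] [Fintype Fq]
    (h n : ℕ) (hh : 1 ≤ h) (hn : h < n)
    (f : Polynomial Fq → ℂ) (hf1 : f 1 = 1)
    (hfU : ∀ G, ‖f G‖ ≤ 1)
    (hfmul : ∀ A B : Polynomial Fq, IsCoprime A B → f (A * B) = f A * f B)
    (G : Polynomial Fq) (hG : G.Monic)
    (hfac : ∃ R ∈ (Finset.Icc h n).biUnion (Px Fq), R ∣ G) :
    f G = ∑ R ∈ ((Finset.Icc h n).biUnion (Px Fq)).filter (· ∣ G),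
      f (R * (G / R)) /
        ((if IsCoprime R (G / R) then (1 : ℂ) else 0) + (omegaIcc h n (G / R) : ℂ)) :=
  ramare_identity_general Fq h n f G hfac
end

section
/- The number of monic irreducible polynomials of degree x over F_q satisfies π_q(x) ≤ q^x / x for all x ≥ 1, and q^x/x - 2q^{x/2}/x ≤ π_q(x). -/
open Polynomial Finset Filter
open scoped Classical

/-!
Let `L/𝔽_q` be an extension of degree `x`, so `|L| = q^x`. Sending `α ∈ L` to its minimal
polynomial maps the elements of degree exactly `x` onto the monic irreducible polynomials of
degree `x`, each fibre being the `x` distinct roots of such a polynomial (it divides the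
separable polynomial `X^(q^x) - X`, which splits in `L`); hence
`x·π_q(x) ≤ q^x`. Every other `α` has degree a proper divisor `d ≤ x/2` of `x`, so it lies in
`{α | α^(q^d) = α}`, of size at most `q^d`, and `∑_{1 ≤ d ≤ x/2} q^d ≤ 2q^(x/2)`.
-/

open Module

lemma degree_sum_C_mul_X_pow_lt {R : Type*} [Semiring R] (n : ℕ) (c : Fin n → R) :
    (∑ i : Fin n, C (c i) * X ^ (i : ℕ)).degree < (n : WithBot ℕ) := by
  refine (degree_sum_le _ _).trans_lt <|
    (Finset.sup_lt_iff (WithBot.bot_lt_coe n)).2 fun i _ => ?_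
  exact (degree_C_mul_X_pow_le _ _).trans_lt (WithBot.coe_lt_coe.2 i.2)

section

variable {K : Type} [Field K] [Fintype K]

lemma mem_Mn_iff {n : ℕ} {P : K[X]} : P ∈ Mn K n ↔ P.Monic ∧ P.natDegree = n := by
  simp only [Mn, Finset.mem_image, Finset.mem_univ, true_and]
  constructor
  · rintro ⟨c, rfl⟩
    have hlt := degree_sum_C_mul_X_pow_lt n c
    refine ⟨monic_X_pow_add (by simpa using hlt), natDegree_eq_of_degree_eq_some ?_⟩
    rw [degree_add_eq_left_of_degree_lt (by rwa [degree_X_pow]), degree_X_pow]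
  · rintro ⟨hm, rfl⟩
    refine ⟨fun i => P.coeff i, ?_⟩
    rw [Fin.sum_univ_eq_sum_range (fun i => C (P.coeff i) * X ^ i), ← hm.as_sum]

lemma mem_Px_iff {n : ℕ} {P : K[X]} :
    P ∈ Px K n ↔ P.Monic ∧ P.natDegree = n ∧ Irreducible P := by
  rw [Px, Finset.mem_filter, mem_Mn_iff, and_assoc]

end

lemma card_filter_pow_eq_self_le {L : Type} [Field L] [Fintype L] {m : ℕ} (hm : 1 < m) :
    #{α : L | α ^ m = α} ≤ m := by
  calc #{α : L | α ^ m = α} ≤ (X ^ m - X : L[X]).roots.toFinset.card := by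
        refine Finset.card_le_card fun α hα => ?_
        rw [Multiset.mem_toFinset, mem_roots (FiniteField.X_pow_card_sub_X_ne_zero L hm)]
        simpa [sub_eq_zero] using (Finset.mem_filter.1 hα).2
    _ ≤ Multiset.card (X ^ m - X : L[X]).roots := Multiset.toFinset_card_le _
    _ ≤ m := (card_roots' _).trans (FiniteField.X_pow_card_sub_X_natDegree_eq L hm).le

lemma sum_Icc_pow_le_two_mul_pow {q : ℕ} (hq : 2 ≤ q) (m : ℕ) :
    ∑ d ∈ Finset.Icc 1 m, q ^ d ≤ 2 * q ^ m := by
  induction m with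
  | zero => simp
  | succ m ih =>
    rw [Finset.sum_Icc_succ_top (by omega)]
    have : 2 * q ^ m ≤ q ^ (m + 1) := by rw [pow_succ, mul_comm]; exact Nat.mul_le_mul_left _ hq
    omega

lemma le_half_of_dvd_of_ne {d n : ℕ} (hn : n ≠ 0) (hd : d ∣ n) (hne : d ≠ n) :
    d ≤ n / 2 := by
  obtain ⟨k, rfl⟩ := hd
  rcases k with _ | _ | k
  · simp at hn
  · simp at hne
  · rw [Nat.le_div_iff_mul_le two_pos]
    exact Nat.mul_le_mul_left d (by omega)

section

variable {K L : Type} [Field K] [Fintype K] [Field L] [Fintype L] [Algebra K L]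

lemma splits_map_of_natDegree_dvd_finrank {P : K[X]} (hP : Irreducible P)
    (hd : P.natDegree ∣ finrank K L) : (P.map (algebraMap K L)).Splits := by
  have hdvd := hP.natDegree_dvd_iff_dvd_X_pow_card_pow_sub_X.1 hd
  rw [← natCard_eq_pow_finrank] at hdvd
  refine splits_X_pow_nat_card_sub_X.of_dvd
    (FiniteField.X_pow_card_sub_X_ne_zero L Finite.one_lt_card) ?_
  simpa using map_dvd (algebraMap K L) hdvd

lemma card_filter_minpoly_eq {P : K[X]} (hP : P ∈ Px K (finrank K L)) :
    #{α : L | minpoly K α = P} = finrank K L := by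
  obtain ⟨hmonic, hdeg, hirr⟩ := mem_Px_iff.1 hP
  have hroots : ({α : L | minpoly K α = P} : Finset L) = (P.rootSet L).toFinset := by
    ext α
    simp only [Finset.mem_filter, Finset.mem_univ, true_and, Set.mem_toFinset,
      mem_rootSet_of_ne hirr.ne_zero]
    exact ⟨fun h => h ▸ minpoly.aeval K α,
      fun h => (minpoly.eq_of_irreducible_of_monic hirr h hmonic).symm⟩
  rw [hroots, Set.toFinset_card, card_rootSet_eq_natDegree
    (PerfectField.separable_of_irreducible hirr)
    (splits_map_of_natDegree_dvd_finrank hirr (hdeg ▸ dvd_rfl)), hdeg]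

lemma finrank_mul_card_Px :
    finrank K L * #(Px K (finrank K L)) = #{α : L | (minpoly K α).natDegree = finrank K L} := by
  have hmaps : Set.MapsTo (minpoly K)
      (({α : L | (minpoly K α).natDegree = finrank K L} : Finset L) : Set L)
      (Px K (finrank K L) : Set K[X]) := fun α hα => by
    have hint := Algebra.IsIntegral.isIntegral (R := K) α
    exact mem_Px_iff.2
      ⟨minpoly.monic hint, (Finset.mem_filter.1 hα).2, minpoly.irreducible hint⟩
  rw [card_eq_sum_card_fiberwise hmaps, mul_comm, ← smul_eq_mul, ← Finset.sum_const]
  refine Finset.sum_congr rfl fun P hP => ?_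
  rw [Finset.filter_filter, Finset.filter_congr (q := fun α => minpoly K α = P),
    card_filter_minpoly_eq hP]
  exact fun α _ => and_iff_right_of_imp fun h => h ▸ (mem_Px_iff.1 hP).2.1

lemma pow_card_pow_natDegree_minpoly (α : L) :
    α ^ Fintype.card K ^ (minpoly K α).natDegree = α := by
  have hirr := minpoly.irreducible (Algebra.IsIntegral.isIntegral (R := K) α)
  obtain ⟨c, hc⟩ := hirr.natDegree_dvd_iff_dvd_X_pow_card_pow_sub_X.1 dvd_rfl
  have := congrArg (aeval α) hc
  rw [map_mul, minpoly.aeval, zero_mul, Nat.card_eq_fintype_card] at this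
  simpa [sub_eq_zero] using this

lemma card_filter_natDegree_minpoly_ne_le :
    #{α : L | (minpoly K α).natDegree ≠ finrank K L} ≤
      2 * Fintype.card K ^ (finrank K L / 2) := by
  set q := Fintype.card K
  have hq : 1 < q := Fintype.one_lt_card
  have hsub : ({α : L | (minpoly K α).natDegree ≠ finrank K L} : Finset L) ⊆
      (Finset.Icc 1 (finrank K L / 2)).biUnion fun d => {α : L | α ^ q ^ d = α} := by
    intro α hα
    have hint := Algebra.IsIntegral.isIntegral (R := K) α
    simp only [Finset.mem_biUnion, Finset.mem_Icc, Finset.mem_filter, Finset.mem_univ,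
      true_and] at hα ⊢
    refine ⟨_, ⟨minpoly.natDegree_pos hint, ?_⟩, pow_card_pow_natDegree_minpoly α⟩
    exact le_half_of_dvd_of_ne finrank_pos.ne' (minpoly.degree_dvd hint) hα
  calc _ ≤ ∑ d ∈ Finset.Icc 1 (finrank K L / 2), #{α : L | α ^ q ^ d = α} :=
        (Finset.card_le_card hsub).trans Finset.card_biUnion_le
    _ ≤ ∑ d ∈ Finset.Icc 1 (finrank K L / 2), q ^ d := by
        refine Finset.sum_le_sum fun d hd => card_filter_pow_eq_self_le ?_
        exact Nat.one_lt_pow (by simp at hd; omega) hq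
    _ ≤ 2 * q ^ (finrank K L / 2) := sum_Icc_pow_le_two_mul_pow hq _

lemma finrank_mul_card_Px_le :
    finrank K L * #(Px K (finrank K L)) ≤ Fintype.card K ^ finrank K L := by
  rw [finrank_mul_card_Px, ← card_eq_pow_finrank]
  exact Finset.card_filter_le _ _

lemma card_pow_finrank_le_finrank_mul_card_Px_add :
    Fintype.card K ^ finrank K L ≤
      finrank K L * #(Px K (finrank K L)) + 2 * Fintype.card K ^ (finrank K L / 2) := by
  rw [← card_eq_pow_finrank, ← Finset.card_univ, finrank_mul_card_Px,
    ← Finset.card_filter_add_card_filter_not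
      (fun α : L => (minpoly K α).natDegree = finrank K L)]
  exact Nat.add_le_add_left card_filter_natDegree_minpoly_ne_le _

end

theorem prime_polynomial_count (Fq : Type) [Field Fq] [Fintype Fq]
    (x : ℕ) (hx : 1 ≤ x) :
    ((Px Fq x).card : ℝ) ≤ (Fintype.card Fq : ℝ) ^ x / (x : ℝ) ∧
    (Fintype.card Fq : ℝ) ^ x / (x : ℝ) -
        2 * (Fintype.card Fq : ℝ) ^ ((x : ℝ) / 2) / (x : ℝ) ≤ ((Px Fq x).card : ℝ) := by
  obtain ⟨p, _⟩ := CharP.exists Fq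
  have : Fact p.Prime := ⟨CharP.char_is_prime Fq p⟩
  have : NeZero x := ⟨by omega⟩
  let L := FiniteField.Extension Fq p x
  have : Fintype L := Fintype.ofFinite L
  have hdeg : finrank Fq L = x := FiniteField.finrank_extension Fq p x
  have hupper := finrank_mul_card_Px_le (K := Fq) (L := L)
  have hlower := card_pow_finrank_le_finrank_mul_card_Px_add (K := Fq) (L := L)
  rw [hdeg] at hupper hlower
  set q := Fintype.card Fq
  have hhalf : (q : ℝ) ^ (x / 2) ≤ (q : ℝ) ^ ((x : ℝ) / 2) := by
    rw [← Real.rpow_natCast]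
    exact Real.rpow_le_rpow_of_exponent_le (mod_cast Fintype.card_pos) Nat.cast_div_le
  have hxpos : (0 : ℝ) < x := by exact_mod_cast hx
  constructor
  · rw [le_div_iff₀ hxpos, mul_comm]
    exact_mod_cast hupper
  · rw [div_sub_div_same, div_le_iff₀ hxpos, sub_le_iff_le_add, mul_comm]
    have : (q : ℝ) ^ x ≤ x * (Px Fq x).card + 2 * (q : ℝ) ^ (x / 2) := by
      exact_mod_cast hlower
    linarith
end

section
/- Extraction via Ramaré: for 1 ≤ h < n and any Dirichlet character χ, Σ_{G ∈ M_n, G not h-smooth} λ(G)χ(G) = Σ_{h < x ≤ n} Σ_{P ∈ P_x} λ(P)χ(P) Σ_{M ∈ M_{n-x}} λ(M)χ(M)/(ω_{(h,n)}(M) + 1_{gcd(P,M)=1}). -/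
open Polynomial Finset Filter
open scoped Classical

/-! Ramaré's trick: a non-`h`-smooth `G ∈ M_n` has `ω_{(h,n]}(G) ≥ 1` monic irreducible divisors
of degree in `(h, n]`, so its term can be split evenly among them. Exchanging the two sums and
writing `G = P * M` turns the weight `1 / ω(G)` into `1 / (ω(M) + 1_{P ∤ M})`, while the complete
multiplicativity of `λ χ` splits the term as `λ(P) χ(P) · λ(M) χ(M)`. -/

theorem sum_eq_sum_sum_div_card_filter_dvd {α K : Type*} [CommMonoidWithZero α]
    [IsLeftCancelMulZero α] [Field K] [CharZero K] (T Ps : Finset α) (D : α → Finset α)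
    (hD : ∀ P ∈ Ps, ∀ M, M ∈ D P ↔ P * M ∈ T) (hPs : ∀ P ∈ Ps, P ≠ 0)
    (hT : ∀ G ∈ T, ∃ P ∈ Ps, P ∣ G) (f : α → K) :
    ∑ G ∈ T, f G = ∑ P ∈ Ps, ∑ M ∈ D P, f (P * M) / #{R ∈ Ps | R ∣ P * M} := by
  have hsplit : ∀ G ∈ T, f G = ∑ P ∈ Ps with P ∣ G, f G / #{R ∈ Ps | R ∣ G} := by
    intro G hG
    obtain ⟨P, hP, hPG⟩ := hT G hG
    have hω : (#{R ∈ Ps | R ∣ G} : K) ≠ 0 :=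
      Nat.cast_ne_zero.2 (card_ne_zero_of_mem (mem_filter.2 ⟨hP, hPG⟩))
    rw [sum_const, nsmul_eq_mul, mul_div_cancel₀ _ hω]
  have hfiber : ∀ P ∈ Ps, {G ∈ T | P ∣ G} = (D P).image (P * ·) := by
    intro P hP
    ext G
    simp only [mem_filter, mem_image]
    constructor
    · rintro ⟨hG, M, rfl⟩
      exact ⟨M, (hD P hP M).2 hG, rfl⟩
    · rintro ⟨M, hM, rfl⟩
      exact ⟨(hD P hP M).1 hM, dvd_mul_right P M⟩
  calc ∑ G ∈ T, f G = ∑ G ∈ T, ∑ P ∈ Ps with P ∣ G, f G / #{R ∈ Ps | R ∣ G} :=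
        sum_congr rfl hsplit
    _ = ∑ P ∈ Ps, ∑ G ∈ T with P ∣ G, f G / #{R ∈ Ps | R ∣ G} :=
        sum_comm' fun G P => by simp only [mem_filter]; tauto
    _ = _ := sum_congr rfl fun P hP => by
        rw [hfiber P hP, sum_image fun M _ M' _ => mul_left_cancel₀ (hPs P hP)]

theorem card_filter_dvd_mul_s19 {F : Type*} [Field F] {Ps : Finset F[X]}
    (hPs : ∀ R ∈ Ps, R.Monic ∧ Irreducible R) {P : F[X]} (hP : P ∈ Ps) (M : F[X]) :
    #{R ∈ Ps | R ∣ P * M} = #{R ∈ Ps | R ∣ M} + if ¬ P ∣ M then 1 else 0 := by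
  have hset : {R ∈ Ps | R ∣ P * M} = insert P {R ∈ Ps | R ∣ M} := by
    ext R
    simp only [mem_filter, mem_insert]
    constructor
    · rintro ⟨hR, hRPM⟩
      obtain ⟨hRm, hRi⟩ := hPs R hR
      refine (hRi.prime.dvd_mul.1 hRPM).imp (fun hRP => ?_) fun hRM => ⟨hR, hRM⟩
      exact eq_of_monic_of_associated hRm (hPs P hP).1 (hRi.associated_of_dvd (hPs P hP).2 hRP)
    · rintro (rfl | ⟨hR, hRM⟩)
      · exact ⟨hP, dvd_mul_right R M⟩
      · exact ⟨hR, hRM.mul_left P⟩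
  rw [hset]
  by_cases hPM : P ∣ M
  · rw [card_insert_of_mem (mem_filter.2 ⟨hP, hPM⟩), if_neg (not_not.2 hPM), add_zero]
  · have hnotMem : P ∉ {R ∈ Ps | R ∣ M} := fun hmem => hPM (mem_filter.1 hmem).2
    rw [card_insert_of_notMem hnotMem, if_pos hPM]

section Polynomial

variable {Fq : Type} [Field Fq] [Fintype Fq]

theorem mem_Mn {m : ℕ} {G : Fq[X]} : G ∈ Mn Fq m ↔ G.Monic ∧ G.natDegree = m := by
  simp only [Mn, mem_image, mem_univ, true_and]
  constructor
  · rintro ⟨c, rfl⟩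
    have hlt := degree_sum_fin_lt c
    refine ⟨monic_X_pow_add hlt, natDegree_eq_of_degree_eq_some ?_⟩
    rw [degree_add_eq_left_of_degree_lt (by rwa [degree_X_pow]), degree_X_pow]
  · rintro ⟨hG, rfl⟩
    refine ⟨fun i => G.coeff i, ?_⟩
    rw [Fin.sum_univ_eq_sum_range (fun i => C (G.coeff i) * X ^ i), ← hG.as_sum]

theorem mem_Px {x : ℕ} {P : Fq[X]} :
    P ∈ Px Fq x ↔ P.Monic ∧ Irreducible P ∧ P.natDegree = x := by
  simp only [Px, mem_filter, mem_Mn]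
  tauto

theorem mem_biUnion_Px {h n : ℕ} {P : Fq[X]} :
    P ∈ (Ioc h n).biUnion (Px Fq) ↔
      P.Monic ∧ Irreducible P ∧ h < P.natDegree ∧ P.natDegree ≤ n := by
  simp only [mem_biUnion, mem_Px, mem_Ioc]
  constructor
  · rintro ⟨x, hx, hPm, hPi, rfl⟩
    exact ⟨hPm, hPi, hx⟩
  · rintro ⟨hPm, hPi, hx⟩
    exact ⟨_, hx, hPm, hPi, rfl⟩

theorem pairwiseDisjoint_Px (s : Set ℕ) : s.PairwiseDisjoint (Px Fq) := by
  intro x _ y _ hxy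
  refine disjoint_left.2 fun P hx hy => hxy ?_
  rw [← (mem_Px.1 hx).2.2, ← (mem_Px.1 hy).2.2]

theorem mul_mem_Mn_iff {n : ℕ} {P M : Fq[X]} (hP : P.Monic) (hPn : P.natDegree ≤ n) :
    P * M ∈ Mn Fq n ↔ M ∈ Mn Fq (n - P.natDegree) := by
  simp only [mem_Mn]
  constructor
  · rintro ⟨hPM, hdeg⟩
    have hM := hP.of_mul_monic_left hPM
    refine ⟨hM, ?_⟩
    rw [hP.natDegree_mul hM] at hdeg
    omega
  · rintro ⟨hM, hdeg⟩
    refine ⟨hP.mul hM, ?_⟩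
    rw [hP.natDegree_mul hM]
    omega

theorem exists_mem_biUnion_Px_dvd {h n : ℕ} {G : Fq[X]} (hG : G ∈ Mn Fq n)
    (hsm : ¬ IsSmooth h G) : ∃ P ∈ (Ioc h n).biUnion (Px Fq), P ∣ G := by
  obtain ⟨hGm, rfl⟩ := mem_Mn.1 hG
  simp only [IsSmooth, not_forall, not_le] at hsm
  obtain ⟨P, hPi, hPG, hPh⟩ := hsm
  have hdeg : (normalize P).natDegree = P.natDegree :=
    natDegree_eq_of_degree_eq degree_normalize
  refine ⟨normalize P, mem_biUnion_Px.2 ⟨monic_normalize hPi.ne_zero,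
    (associated_normalize P).irreducible hPi, hdeg ▸ hPh, ?_⟩, normalize_dvd_iff.2 hPG⟩
  exact hdeg ▸ natDegree_le_of_dvd hPG hGm.ne_zero

theorem liouville_mul {P M : Fq[X]} (hP : P ≠ 0) (hM : M ≠ 0) :
    liouville (P * M) = liouville P * liouville M := by
  rw [liouville, liouville, liouville, ← pow_add, ← Multiset.card_add,
    Multiset.card_eq_card_of_rel (UniqueFactorizationMonoid.factors_mul hP hM)]

theorem chpoly_mul {Q : Fq[X]} (χ : MulChar (RQ Fq Q) ℂ) (P M : Fq[X]) :
    chpoly χ (P * M) = chpoly χ P * chpoly χ M := by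
  simp only [chpoly, map_mul]

end Polynomial

theorem ramare_extraction_general (Fq : Type) [Field Fq] [Fintype Fq]
    (h n : ℕ)
    (Q : Polynomial Fq) (χ : MulChar (RQ Fq Q) ℂ) :
    ∑ G ∈ (Mn Fq n).filter (fun G => ¬ IsSmooth h G), (liouville G : ℂ) * chpoly χ G =
      ∑ x ∈ Finset.Ioc h n, ∑ P ∈ Px Fq x,
        (liouville P : ℂ) * chpoly χ P *
          ∑ M ∈ Mn Fq (n - x),
            (liouville M : ℂ) * chpoly χ M /
              ((omegaIoc h n M : ℂ) + if ¬ P ∣ M then 1 else 0) := by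
  have hPs : ∀ P ∈ (Ioc h n).biUnion (Px Fq), P.Monic ∧ Irreducible P := fun P hP =>
    ⟨(mem_biUnion_Px.1 hP).1, (mem_biUnion_Px.1 hP).2.1⟩
  have hfactor : ∀ P ∈ (Ioc h n).biUnion (Px Fq), ∀ M,
      M ∈ Mn Fq (n - P.natDegree) ↔ P * M ∈ (Mn Fq n).filter (fun G => ¬ IsSmooth h G) := by
    intro P hP M
    obtain ⟨hPm, hPi, hPh, hPn⟩ := mem_biUnion_Px.1 hP
    rw [mem_filter, mul_mem_Mn_iff hPm hPn, iff_self_and]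
    exact fun _ hsm => (hsm P hPi (dvd_mul_right P M)).not_gt hPh
  rw [sum_eq_sum_sum_div_card_filter_dvd _ _ _ hfactor (fun P hP => (hPs P hP).2.ne_zero)
      (fun G hG => exists_mem_biUnion_Px_dvd (mem_filter.1 hG).1 (mem_filter.1 hG).2),
    sum_biUnion (pairwiseDisjoint_Px _)]
  refine sum_congr rfl fun x hx => sum_congr rfl fun P hP => ?_
  obtain ⟨hPm, hPi, rfl⟩ := mem_Px.1 hP
  rw [mul_sum]
  refine sum_congr rfl fun M hM => ?_
  rw [omegaIoc, card_filter_dvd_mul_s19 hPs (mem_biUnion_Px.2 ⟨hPm, hPi, mem_Ioc.1 hx⟩) M,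
    liouville_mul hPi.ne_zero (mem_Mn.1 hM).1.ne_zero, chpoly_mul]
  push_cast
  ring

theorem ramare_extraction (Fq : Type) [Field Fq] [Fintype Fq]
    (h n : ℕ) (hh : 1 ≤ h) (hn : h < n)
    (Q : Polynomial Fq) (χ : MulChar (RQ Fq Q) ℂ) :
    ∑ G ∈ (Mn Fq n).filter (fun G => ¬ IsSmooth h G), (liouville G : ℂ) * chpoly χ G =
      ∑ x ∈ Finset.Ioc h n, ∑ P ∈ Px Fq x,
        (liouville P : ℂ) * chpoly χ P *
          ∑ M ∈ Mn Fq (n - x),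
            (liouville M : ℂ) * chpoly χ M /
              ((omegaIoc h n M : ℂ) + if ¬ P ∣ M then 1 else 0) :=
  ramare_extraction_general Fq h n Q χ
end
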